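/- For every permutation π, the occurrence graph G_{12}(π) of the pattern 12 in π is a forest (contains no simple cycle) if and only if π avoids the four patterns 123, 1432, 2143 and 3214; that is, 𝒢_{12,forest} = Av(123, 1432, 2143, 3214). -/

import Mathlib

/-!
Occurrences of `12` in `π` are the pairs `{a, b}` with `a < b` and `π a < π b`, and two of them
are adjacent iff they share exactly one index, so `G₁₂(π)` is the line graph of the graph of these
pairs. Each forbidden pattern produces a short cycle: `123`, `1432` and `3214` a triangle, `2143` a
square.

Conversely, avoiding `123`, `1432` and `3214` leaves every index in at most two occurrences. On a
cycle of occurrences the two neighbours of `{p, q}` each share one index with it, and they cannot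
both share `q`; so some occurrence of the cycle contains `p` but not `q`. Let `v` be the smallest
index met by the cycle. It has two partners `t < t'` on the cycle, and leaving `{v, t}` through `t`
gives a partner `x > v` of `t`. Avoiding `123` forces `x < t` and `π x < π v < π t' < π t`, which
is `2143`.
-/

open Finset

/-- `s` is an occurrence (index set) of the pattern `p` in the permutation `π`:
`s` has `k` elements and, listed increasingly, `π` on `s` is order isomorphic to `p`. -/
def IsOccurrence {k n : ℕ} (p : Equiv.Perm (Fin k)) (π : Equiv.Perm (Fin n))
    (s : Finset (Fin n)) : Prop :=
  ∃ h : s.card = k, ∀ a b : Fin k,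
    π ↑(s.orderIsoOfFin h a) < π ↑(s.orderIsoOfFin h b) ↔ p a < p b

/-- The occurrence set `V_p(π)` of all occurrence index sets of `p` in `π`. -/
def OccSet {k n : ℕ} (p : Equiv.Perm (Fin k)) (π : Equiv.Perm (Fin n)) :
    Set (Finset (Fin n)) :=
  {s | IsOccurrence p π s}

/-- The occurrence graph `G_p(π)`: vertices are the occurrences of `p` in `π`,
two occurrences adjacent iff they differ in exactly one element. -/
def OccGraph {k n : ℕ} (p : Equiv.Perm (Fin k)) (π : Equiv.Perm (Fin n)) :
    SimpleGraph {s : Finset (Fin n) // IsOccurrence p π s} where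
  Adj u v := (u.val \ v.val).card = 1 ∧ (v.val \ u.val).card = 1
  symm := ⟨fun u v h => ⟨h.2, h.1⟩⟩
  loopless := ⟨fun u h => by simp at h⟩

/-- `σ` contains the pattern `π` (there is an occurrence of `π` in `σ`,
given by a strictly increasing index injection). -/
def PermContains {m n : ℕ} (σ : Equiv.Perm (Fin n)) (π : Equiv.Perm (Fin m)) : Prop :=
  ∃ j : Fin m → Fin n, StrictMono j ∧ ∀ a b : Fin m, σ (j a) < σ (j b) ↔ π a < π b

/-- The permutation 1432 (0-indexed values). -/
def perm1432 : Equiv.Perm (Fin 4) := ⟨![0, 3, 2, 1], ![0, 3, 2, 1], by decide, by decide⟩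

/-- The permutation 3214 (0-indexed values). -/
def perm3214 : Equiv.Perm (Fin 4) := ⟨![2, 1, 0, 3], ![2, 1, 0, 3], by decide, by decide⟩

/-- The permutation 2143 (0-indexed values). -/
def perm2143 : Equiv.Perm (Fin 4) := ⟨![1, 0, 3, 2], ![1, 0, 3, 2], by decide, by decide⟩

theorem exists_lt_lt_of_ne {α : Type*} [LinearOrder α] {P : α → Prop} {x y z : α}
    (hxy : x ≠ y) (hxz : x ≠ z) (hyz : y ≠ z) (hx : P x) (hy : P y) (hz : P z) :
    ∃ a b c, a < b ∧ b < c ∧ P a ∧ P b ∧ P c := by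
  classical
  have hs : ({x, y, z} : Finset α).card = 3 := Finset.card_eq_three.2 ⟨x, y, z, hxy, hxz, hyz, rfl⟩
  set f := Finset.orderEmbOfFin _ hs
  have hP : ∀ i, P (f i) := fun i => by
    have hi := Finset.orderEmbOfFin_mem _ hs i
    simp only [Finset.mem_insert, Finset.mem_singleton] at hi
    rcases hi with h | h | h <;> rw [h] <;> assumption
  exact ⟨f 0, f 1, f 2, f.strictMono (by decide), f.strictMono (by decide), hP 0, hP 1, hP 2⟩

namespace SimpleGraph

variable {V : Type*} {G : SimpleGraph V}

theorem exists_two_adj_of_not_isAcyclic (h : ¬ G.IsAcyclic) :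
    ∃ W : Set V, W.Nonempty ∧ ∀ w ∈ W, ∃ x ∈ W, ∃ y ∈ W, x ≠ y ∧ G.Adj w x ∧ G.Adj w y := by
  simp only [IsAcyclic, not_forall, not_not] at h
  obtain ⟨u, c, hc⟩ := h
  refine ⟨{w | w ∈ c.support}, ⟨u, c.start_mem_support⟩, fun w hw => ?_⟩
  obtain ⟨x, y, hxy, hN⟩ := Set.ncard_eq_two.1 (hc.ncard_neighborSet_toSubgraph_eq_two hw)
  have hx : c.toSubgraph.Adj w x := by simp [← Subgraph.mem_neighborSet, hN]
  have hy : c.toSubgraph.Adj w y := by simp [← Subgraph.mem_neighborSet, hN]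
  exact ⟨x, (Walk.mem_verts_toSubgraph _).1 hx.snd_mem, y,
    (Walk.mem_verts_toSubgraph _).1 hy.snd_mem, hxy, hx.adj_sub, hy.adj_sub⟩

theorem not_isAcyclic_of_triangle [DecidableEq V] {u v w : V}
    (huv : G.Adj u v) (huw : G.Adj u w) (hvw : G.Adj v w) : ¬ G.IsAcyclic :=
  fun h => h.cliqueFree le_rfl {u, v, w} (is3Clique_triple_iff.2 ⟨huv, huw, hvw⟩)

theorem not_isAcyclic_of_square {u v w x : V} (huv : G.Adj u v) (hvw : G.Adj v w)
    (hwx : G.Adj w x) (hxu : G.Adj x u) (huw : u ≠ w) (hvx : v ≠ x) : ¬ G.IsAcyclic :=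
  fun h => h (.cons huv (.cons hvw (.cons hwx (.cons hxu .nil)))) (by
    simp [Walk.cons_isCycle_iff, huv.ne, hvw.ne, hwx.ne, hxu.ne, huv.ne', hxu.ne', huw, hvx,
      huw.symm])

end SimpleGraph

theorem permContains_iff {m n : ℕ} (σ : Equiv.Perm (Fin n)) (p : Equiv.Perm (Fin m)) :
    PermContains σ p ↔ ∃ j : Fin m → Fin n, StrictMono j ∧ StrictMono (σ ∘ j ∘ p.symm) := by
  refine exists_congr fun j => and_congr_right fun _ => ⟨fun h a b hab => ?_, fun h a b => ?_⟩
  · simpa using (h (p.symm a) (p.symm b)).2 (by simpa using hab)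
  · simpa using h.lt_iff_lt (a := p a) (b := p b)

section Patterns

variable {n : ℕ} (σ : Equiv.Perm (Fin n))

theorem permContains_123_iff :
    PermContains σ (Equiv.refl (Fin 3)) ↔ ∃ a b c, a < b ∧ b < c ∧ σ a < σ b ∧ σ b < σ c := by
  simp only [permContains_iff, ← FinVec.exists_iff, FinVec.Exists]
  simp [Fin.strictMono_iff_lt_succ, Fin.forall_fin_succ, and_assoc]

theorem permContains_1432_iff :
    PermContains σ perm1432 ↔
      ∃ a b c d, a < b ∧ b < c ∧ c < d ∧ σ a < σ d ∧ σ d < σ c ∧ σ c < σ b := by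
  simp only [permContains_iff, ← FinVec.exists_iff, FinVec.Exists]
  simp [Fin.strictMono_iff_lt_succ, Fin.forall_fin_succ, perm1432, and_assoc]

theorem permContains_2143_iff :
    PermContains σ perm2143 ↔
      ∃ a b c d, a < b ∧ b < c ∧ c < d ∧ σ b < σ a ∧ σ a < σ d ∧ σ d < σ c := by
  simp only [permContains_iff, ← FinVec.exists_iff, FinVec.Exists]
  simp [Fin.strictMono_iff_lt_succ, Fin.forall_fin_succ, perm2143, and_assoc]

theorem permContains_3214_iff :
    PermContains σ perm3214 ↔
      ∃ a b c d, a < b ∧ b < c ∧ c < d ∧ σ c < σ b ∧ σ b < σ a ∧ σ a < σ d := by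
  simp only [permContains_iff, ← FinVec.exists_iff, FinVec.Exists]
  simp [Fin.strictMono_iff_lt_succ, Fin.forall_fin_succ, perm3214, and_assoc]

end Patterns

section Occurrences

variable {n : ℕ} {π : Equiv.Perm (Fin n)}

theorem isOccurrence_refl_iff {k : ℕ} {s : Finset (Fin n)} :
    IsOccurrence (Equiv.refl (Fin k)) π s ↔ s.card = k ∧ StrictMonoOn π s := by
  rw [IsOccurrence, ← exists_prop]
  refine exists_congr fun h => ?_
  set f := s.orderIsoOfFin h
  refine ⟨fun hs x hx y hy hxy => ?_, fun hs a b => ?_⟩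
  · obtain ⟨i, rfl⟩ : ∃ i, (f i : Fin n) = x := ⟨f.symm ⟨x, hx⟩, by simp⟩
    obtain ⟨j, rfl⟩ : ∃ j, (f j : Fin n) = y := ⟨f.symm ⟨y, hy⟩, by simp⟩
    exact (hs i j).2 (f.lt_iff_lt.1 hxy)
  · have hf : StrictMonoOn (fun i => (f i : Fin n)) Set.univ := fun i _ j _ hij => f.strictMono hij
    exact (strictMonoOn_univ.1 (hs.comp hf fun i _ => (f i).2)).lt_iff_lt

theorem isOccurrence_pair_iff {a b : Fin n} (hab : a < b) :
    IsOccurrence (Equiv.refl (Fin 2)) π {a, b} ↔ π a < π b := by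
  rw [isOccurrence_refl_iff, Finset.card_pair hab.ne, Finset.coe_pair]
  simp [StrictMonoOn, hab, hab.not_gt]

theorem exists_eq_pair_of_mem {τ : Equiv.Perm (Fin 2)} {s : Finset (Fin n)} {q : Fin n}
    (hs : IsOccurrence τ π s) (hq : q ∈ s) : ∃ r, r ≠ q ∧ s = {q, r} := by
  obtain ⟨h, -⟩ := hs
  obtain ⟨r, hr⟩ := Finset.card_eq_one.1 (by rw [Finset.card_erase_of_mem hq, h] :
    (s.erase q).card = 1)
  exact ⟨r, (Finset.mem_erase.1 (hr ▸ Finset.mem_singleton_self r)).1,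
    by rw [← hr, Finset.insert_erase hq]⟩

theorem ne_of_isOccurrence_pair {τ : Equiv.Perm (Fin 2)} {a b : Fin n}
    (h : IsOccurrence τ π {a, b}) : a ≠ b := by
  rintro rfl
  simpa using h.1

theorem occGraph_adj_of_eq_pair {τ : Equiv.Perm (Fin 2)} {u w : {s // IsOccurrence τ π s}}
    {a b c : Fin n} (hu : u.val = {a, b}) (hw : w.val = {a, c}) (hbc : b ≠ c) :
    (OccGraph τ π).Adj u w := by
  have hab : a ≠ b := ne_of_isOccurrence_pair (hu ▸ u.2)
  have hac : a ≠ c := ne_of_isOccurrence_pair (hw ▸ w.2)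
  constructor <;> rw [hu, hw, Finset.card_eq_one]
  · exact ⟨b, by ext; simp only [mem_sdiff, mem_insert, mem_singleton]; grind⟩
  · exact ⟨c, by ext; simp only [mem_sdiff, mem_insert, mem_singleton]; grind⟩

theorem xor_mem_of_occGraph_adj {τ : Equiv.Perm (Fin 2)} {u m : {s // IsOccurrence τ π s}}
    (h : (OccGraph τ π).Adj u m) {p q : Fin n} (hu : u.val = {p, q}) :
    Xor (p ∈ m.val) (q ∈ m.val) := by
  obtain ⟨hcard, -⟩ := u.2
  have hsdiff := h.1
  rw [hu] at hcard hsdiff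
  by_cases hp : p ∈ m.val <;> by_cases hq : q ∈ m.val
  · rw [Finset.sdiff_eq_empty_iff_subset.2 (Finset.insert_subset hp (by simpa))] at hsdiff
    simp at hsdiff
  · exact Or.inl ⟨hp, hq⟩
  · exact Or.inr ⟨hq, hp⟩
  · rw [Finset.sdiff_eq_self_of_disjoint (by simp [hp, hq]), hcard] at hsdiff
    simp at hsdiff

end Occurrences

section Cycles

variable {n : ℕ} {π : Equiv.Perm (Fin n)}

theorem not_isAcyclic_of_permContains_123 (h : PermContains π (Equiv.refl (Fin 3))) :
    ¬ (OccGraph (Equiv.refl (Fin 2)) π).IsAcyclic := by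
  obtain ⟨a, b, c, hab, hbc, h₁, h₂⟩ := (permContains_123_iff π).1 h
  have hac := hab.trans hbc
  exact SimpleGraph.not_isAcyclic_of_triangle
    (u := ⟨{a, b}, (isOccurrence_pair_iff hab).2 h₁⟩)
    (v := ⟨{a, c}, (isOccurrence_pair_iff hac).2 (h₁.trans h₂)⟩)
    (w := ⟨{b, c}, (isOccurrence_pair_iff hbc).2 h₂⟩)
    (occGraph_adj_of_eq_pair rfl rfl hbc.ne)
    (occGraph_adj_of_eq_pair (Finset.pair_comm a b) rfl hac.ne)
    (occGraph_adj_of_eq_pair (Finset.pair_comm a c) (Finset.pair_comm b c) hab.ne)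

theorem not_isAcyclic_of_permContains_1432 (h : PermContains π perm1432) :
    ¬ (OccGraph (Equiv.refl (Fin 2)) π).IsAcyclic := by
  obtain ⟨a, b, c, d, hab, hbc, hcd, h₁, h₂, h₃⟩ := (permContains_1432_iff π).1 h
  exact SimpleGraph.not_isAcyclic_of_triangle
    (u := ⟨{a, b}, (isOccurrence_pair_iff hab).2 (h₁.trans (h₂.trans h₃))⟩)
    (v := ⟨{a, c}, (isOccurrence_pair_iff (hab.trans hbc)).2 (h₁.trans h₂)⟩)
    (w := ⟨{a, d}, (isOccurrence_pair_iff (hab.trans (hbc.trans hcd))).2 h₁⟩)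
    (occGraph_adj_of_eq_pair rfl rfl hbc.ne)
    (occGraph_adj_of_eq_pair rfl rfl (hbc.trans hcd).ne)
    (occGraph_adj_of_eq_pair rfl rfl hcd.ne)

theorem not_isAcyclic_of_permContains_3214 (h : PermContains π perm3214) :
    ¬ (OccGraph (Equiv.refl (Fin 2)) π).IsAcyclic := by
  obtain ⟨a, b, c, d, hab, hbc, hcd, h₁, h₂, h₃⟩ := (permContains_3214_iff π).1 h
  exact SimpleGraph.not_isAcyclic_of_triangle
    (u := ⟨{a, d}, (isOccurrence_pair_iff (hab.trans (hbc.trans hcd))).2 h₃⟩)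
    (v := ⟨{b, d}, (isOccurrence_pair_iff (hbc.trans hcd)).2 (h₂.trans h₃)⟩)
    (w := ⟨{c, d}, (isOccurrence_pair_iff hcd).2 (h₁.trans (h₂.trans h₃))⟩)
    (occGraph_adj_of_eq_pair (Finset.pair_comm a d) (Finset.pair_comm b d) hab.ne)
    (occGraph_adj_of_eq_pair (Finset.pair_comm a d) (Finset.pair_comm c d) (hab.trans hbc).ne)
    (occGraph_adj_of_eq_pair (Finset.pair_comm b d) (Finset.pair_comm c d) hbc.ne)

theorem not_isAcyclic_of_permContains_2143 (h : PermContains π perm2143) :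
    ¬ (OccGraph (Equiv.refl (Fin 2)) π).IsAcyclic := by
  obtain ⟨a, b, c, d, hab, hbc, hcd, h₁, h₂, h₃⟩ := (permContains_2143_iff π).1 h
  exact SimpleGraph.not_isAcyclic_of_square
    (u := ⟨{a, c}, (isOccurrence_pair_iff (hab.trans hbc)).2 (h₂.trans h₃)⟩)
    (v := ⟨{a, d}, (isOccurrence_pair_iff (hab.trans (hbc.trans hcd))).2 h₂⟩)
    (w := ⟨{b, d}, (isOccurrence_pair_iff (hbc.trans hcd)).2 (h₁.trans h₂)⟩)
    (x := ⟨{b, c}, (isOccurrence_pair_iff hbc).2 (h₁.trans (h₂.trans h₃))⟩)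
    (occGraph_adj_of_eq_pair rfl rfl hcd.ne)
    (occGraph_adj_of_eq_pair (Finset.pair_comm a d) (Finset.pair_comm b d) hab.ne)
    (occGraph_adj_of_eq_pair rfl rfl hcd.ne')
    (occGraph_adj_of_eq_pair (Finset.pair_comm b c) (Finset.pair_comm a c) hab.ne')
    (fun h => by simpa [hab.ne, (hab.trans (hbc.trans hcd)).ne] using congrArg (a ∈ ·.val) h)
    (fun h => by simpa [hab.ne, (hab.trans hbc).ne] using congrArg (a ∈ ·.val) h)

end Cycles

section Forest

variable {n : ℕ} {π : Equiv.Perm (Fin n)}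

theorem permContains_123_or_1432 {v a b c : Fin n} (hva : v < a) (hab : a < b) (hbc : b < c)
    (ha : π v < π a) (hb : π v < π b) (hc : π v < π c) :
    PermContains π (Equiv.refl (Fin 3)) ∨ PermContains π perm1432 := by
  rcases lt_or_gt_of_ne (π.injective.ne hab.ne) with hπab | hπba
  · exact Or.inl ((permContains_123_iff π).2 ⟨v, a, b, hva, hab, ha, hπab⟩)
  rcases lt_or_gt_of_ne (π.injective.ne hbc.ne) with hπbc | hπcb
  · exact Or.inl ((permContains_123_iff π).2 ⟨v, b, c, hva.trans hab, hbc, hb, hπbc⟩)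
  · exact Or.inr ((permContains_1432_iff π).2 ⟨v, a, b, c, hva, hab, hbc, hc, hπcb, hπba⟩)

theorem permContains_123_or_3214 {a b c v : Fin n} (hab : a < b) (hbc : b < c) (hcv : c < v)
    (ha : π a < π v) (hb : π b < π v) (hc : π c < π v) :
    PermContains π (Equiv.refl (Fin 3)) ∨ PermContains π perm3214 := by
  rcases lt_or_gt_of_ne (π.injective.ne hbc.ne) with hπbc | hπcb
  · exact Or.inl ((permContains_123_iff π).2 ⟨b, c, v, hbc, hcv, hπbc, hc⟩)
  rcases lt_or_gt_of_ne (π.injective.ne hab.ne) with hπab | hπba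
  · exact Or.inl ((permContains_123_iff π).2 ⟨a, b, v, hab, hbc.trans hcv, hπab, hb⟩)
  · exact Or.inr ((permContains_3214_iff π).2 ⟨a, b, c, v, hab, hbc, hcv, hπcb, hπba, ha⟩)

theorem not_isOccurrence_of_two_partners (h123 : ¬ PermContains π (Equiv.refl (Fin 3)))
    (h1432 : ¬ PermContains π perm1432) (h3214 : ¬ PermContains π perm3214) {v x y z : Fin n}
    (hx : IsOccurrence (Equiv.refl (Fin 2)) π {v, x})
    (hy : IsOccurrence (Equiv.refl (Fin 2)) π {v, y}) (hxy : x ≠ y) (hzx : z ≠ x) (hzy : z ≠ y) :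
    ¬ IsOccurrence (Equiv.refl (Fin 2)) π {v, z} := by
  intro hz
  obtain ⟨a, b, c, hab, hbc, ha, hb, hc⟩ :=
    exists_lt_lt_of_ne (P := fun i => IsOccurrence (Equiv.refl (Fin 2)) π {v, i})
      hxy hzx.symm hzy.symm hx hy hz
  rcases (ne_of_isOccurrence_pair ha).lt_or_gt with hva | hav
  · rw [isOccurrence_pair_iff hva] at ha
    rw [isOccurrence_pair_iff (hva.trans hab)] at hb
    rw [isOccurrence_pair_iff ((hva.trans hab).trans hbc)] at hc
    exact (permContains_123_or_1432 hva hab hbc ha hb hc).elim h123 h1432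
  rw [Finset.pair_comm, isOccurrence_pair_iff hav] at ha
  rcases (ne_of_isOccurrence_pair hc).lt_or_gt with hvc | hcv
  · rw [isOccurrence_pair_iff hvc] at hc
    exact h123 ((permContains_123_iff π).2 ⟨a, v, c, hav, hvc, ha, hc⟩)
  · rw [Finset.pair_comm, isOccurrence_pair_iff (hbc.trans hcv)] at hb
    rw [Finset.pair_comm, isOccurrence_pair_iff hcv] at hc
    exact (permContains_123_or_3214 hab hbc hcv ha hb hc).elim h123 h3214

theorem not_isOccurrence_of_two_right_partners (h123 : ¬ PermContains π (Equiv.refl (Fin 3)))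
    (h2143 : ¬ PermContains π perm2143) {v x t t' : Fin n} (hvx : v < x) (hvt : v < t)
    (htt' : t < t') (ht : IsOccurrence (Equiv.refl (Fin 2)) π {v, t})
    (ht' : IsOccurrence (Equiv.refl (Fin 2)) π {v, t'}) :
    ¬ IsOccurrence (Equiv.refl (Fin 2)) π {t, x} := by
  intro hx
  rw [isOccurrence_pair_iff hvt] at ht
  rw [isOccurrence_pair_iff (hvt.trans htt')] at ht'
  rcases (ne_of_isOccurrence_pair hx).lt_or_gt with htx | hxt
  · rw [isOccurrence_pair_iff htx] at hx
    exact h123 ((permContains_123_iff π).2 ⟨v, t, x, hvt, htx, ht, hx⟩)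
  rw [Finset.pair_comm, isOccurrence_pair_iff hxt] at hx
  rcases lt_or_gt_of_ne (π.injective.ne hvx.ne) with hπvx | hπxv
  · exact h123 ((permContains_123_iff π).2 ⟨v, x, t, hvx, hxt, hπvx, hx⟩)
  rcases lt_or_gt_of_ne (π.injective.ne htt'.ne) with hπtt' | hπt't
  · exact h123 ((permContains_123_iff π).2 ⟨v, t, t', hvt, htt', ht, hπtt'⟩)
  · exact h2143 ((permContains_2143_iff π).2 ⟨v, x, t, t', hvx, hxt, htt', hπxv, ht', hπt't⟩)

theorem exists_mem_not_mem_of_adj (h123 : ¬ PermContains π (Equiv.refl (Fin 3)))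
    (h1432 : ¬ PermContains π perm1432) (h3214 : ¬ PermContains π perm3214)
    {w m₁ m₂ : {s // IsOccurrence (Equiv.refl (Fin 2)) π s}} (hm : m₁ ≠ m₂)
    (h₁ : (OccGraph (Equiv.refl (Fin 2)) π).Adj w m₁)
    (h₂ : (OccGraph (Equiv.refl (Fin 2)) π).Adj w m₂) {p q : Fin n} (hw : w.val = {p, q}) :
    (p ∈ m₁.val ∧ q ∉ m₁.val) ∨ (p ∈ m₂.val ∧ q ∉ m₂.val) := by
  rcases xor_mem_of_occGraph_adj h₁ hw with h | ⟨hq₁, hp₁⟩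
  · exact Or.inl h
  rcases xor_mem_of_occGraph_adj h₂ hw with h | ⟨hq₂, hp₂⟩
  · exact Or.inr h
  obtain ⟨r₁, -, hr₁⟩ := exists_eq_pair_of_mem m₁.2 hq₁
  obtain ⟨r₂, -, hr₂⟩ := exists_eq_pair_of_mem m₂.2 hq₂
  refine absurd (Finset.pair_comm p q ▸ hw ▸ w.2) (not_isOccurrence_of_two_partners h123 h1432 h3214
    (hr₁ ▸ m₁.2) (hr₂ ▸ m₂.2) (fun h => hm (Subtype.ext (by rw [hr₁, hr₂, h]))) ?_ ?_)
  · rintro rfl; exact hp₁ (by simp [hr₁])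
  · rintro rfl; exact hp₂ (by simp [hr₂])

theorem false_of_forall_exists_mem_not_mem (h123 : ¬ PermContains π (Equiv.refl (Fin 3)))
    (h2143 : ¬ PermContains π perm2143) {S : Set (Finset (Fin n))} (hS : S.Nonempty)
    (hocc : ∀ s ∈ S, IsOccurrence (Equiv.refl (Fin 2)) π s)
    (hleave : ∀ p q, {p, q} ∈ S → ∃ s ∈ S, p ∈ s ∧ q ∉ s) : False := by
  have hne : {i | ∃ s ∈ S, i ∈ s}.Nonempty := by
    obtain ⟨s, hs⟩ := hS
    obtain ⟨i, hi⟩ := Finset.card_pos.1 (by rw [(hocc s hs).1]; exact two_pos)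
    exact ⟨i, s, hs, hi⟩
  obtain ⟨v, ⟨s₀, hs₀, hvs₀⟩, hmin⟩ := wellFounded_lt.has_min _ hne
  have lt_of_mem : ∀ s ∈ S, ∀ i ∈ s, i ≠ v → v < i := fun s hs i hi hiv =>
    (not_lt.1 (hmin i ⟨s, hs, hi⟩)).lt_of_ne hiv.symm
  have partner : ∀ s ∈ S, v ∈ s → ∃ t, v < t ∧ s = {v, t} := fun s hs hv => by
    obtain ⟨t, htv, rfl⟩ := exists_eq_pair_of_mem (hocc s hs) hv
    exact ⟨t, lt_of_mem _ hs t (by simp) htv, rfl⟩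
  have stuck : ∀ t t', v < t → t < t' → {v, t} ∈ S → {v, t'} ∈ S → False := by
    intro t t' hvt htt' ht ht'
    obtain ⟨s, hs, hts, hvs⟩ := hleave t v (Finset.pair_comm v t ▸ ht)
    obtain ⟨x, -, rfl⟩ := exists_eq_pair_of_mem (hocc s hs) hts
    have hvx : v < x := lt_of_mem _ hs x (by simp) (by rintro rfl; simp at hvs)
    exact not_isOccurrence_of_two_right_partners h123 h2143 hvx hvt htt' (hocc _ ht)
      (hocc _ ht') (hocc _ hs)
  obtain ⟨t, hvt, rfl⟩ := partner s₀ hs₀ hvs₀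
  obtain ⟨s₁, hs₁, hvs₁, hts₁⟩ := hleave v t hs₀
  obtain ⟨t', hvt', rfl⟩ := partner s₁ hs₁ hvs₁
  rcases (show t ≠ t' by rintro rfl; simp at hts₁).lt_or_gt with h | h
  exacts [stuck t t' hvt h hs₀ hs₁, stuck t' t hvt' h hs₁ hs₀]

theorem isAcyclic_of_avoids (h123 : ¬ PermContains π (Equiv.refl (Fin 3)))
    (h1432 : ¬ PermContains π perm1432) (h2143 : ¬ PermContains π perm2143)
    (h3214 : ¬ PermContains π perm3214) : (OccGraph (Equiv.refl (Fin 2)) π).IsAcyclic := by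
  by_contra hcyc
  obtain ⟨W, hWne, hW⟩ := SimpleGraph.exists_two_adj_of_not_isAcyclic hcyc
  refine false_of_forall_exists_mem_not_mem h123 h2143 (hWne.image Subtype.val)
    (by rintro _ ⟨w, -, rfl⟩; exact w.2) fun p q ⟨w, hw, hwpq⟩ => ?_
  obtain ⟨m₁, hm₁, m₂, hm₂, hm, h₁, h₂⟩ := hW w hw
  rcases exists_mem_not_mem_of_adj h123 h1432 h3214 hm h₁ h₂ hwpq with h | h
  exacts [⟨m₁, ⟨m₁, hm₁, rfl⟩, h⟩, ⟨m₂, ⟨m₂, hm₂, rfl⟩, h⟩]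

end Forest

theorem forest_iff_avoids (n : ℕ) (π : Equiv.Perm (Fin n)) :
    (OccGraph (Equiv.refl (Fin 2)) π).IsAcyclic ↔
      (¬ PermContains π (Equiv.refl (Fin 3)) ∧
       ¬ PermContains π perm1432 ∧
       ¬ PermContains π perm2143 ∧
       ¬ PermContains π perm3214) :=
  ⟨fun h => ⟨fun h₁ => not_isAcyclic_of_permContains_123 h₁ h,
      fun h₂ => not_isAcyclic_of_permContains_1432 h₂ h,
      fun h₃ => not_isAcyclic_of_permContains_2143 h₃ h,
      fun h₄ => not_isAcyclic_of_permContains_3214 h₄ h⟩,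
    fun ⟨h₁, h₂, h₃, h₄⟩ => isAcyclic_of_avoids h₁ h₂ h₃ h₄⟩
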